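/- Explicit value of the energy of the generalized solitons κ*(d,ν): For every d ∈ ℝ^N with |d| < 1 and every ν > −1 + |d|, setting λ = ( (1−|d|²) / ((1+ν)² − |d|²) )^{1/(p−1)}, one has E( κ*₁(d,ν,·), κ*₂(d,ν,·) ) = ( E(κ₀, 0) / (p−1) ) · λ² · ( p + 1 + 2 λ^{p−1} ( ν²/(1−|d|²) − 1 ) ), where E(κ₀, 0) denotes the energy of the constant pair (κ₀, 0). -/

import Mathlib

/-!
The energy density of `κ*(d,ν)` at `y` depends on `y` only through `w = 1 + ν + ⟪d, y⟫`: up to the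
factor `(κ₀ (1-|d|²)^{1/(p-1)})²` it is a combination of `w^{-(2γ+2)}`, `w^{-(2γ+1)}`, `w^{-2γ}`
with `γ = 2/(p-1)`. Rotating `d` to `|d| e₀` and integrating out the directions orthogonal to `e₀`
turns both energies into the same constant times integrals over `[-1,1]` against `(1-t²)^γ`, because
`α + (N-1)/2 = γ`. The Möbius substitution `t = (a u - b)/(a - b u)` gives
`∫ (1-t²)^γ (a+bt)^{-(2γ+2)} = (a²-b²)^{-(γ+1)} ∫ (1-t²)^γ`, and differentiating
`b (1-t²)^{γ+1} (a+bt)^{-(2γ+1)}` eliminates the other two moments.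
-/

open MeasureTheory Metric
open scoped RealInnerProductSpace

noncomputable section

/-- The exponent `α = 2/(p−1) − (N−1)/2`. -/
def alphaExp (N : ℕ) (p : ℝ) : ℝ := 2 / (p - 1) - ((N : ℝ) - 1) / 2

/-- The weight `ρ(y) = (1−|y|²)^α` on the unit ball. -/
def rho (N : ℕ) (p : ℝ) (y : EuclideanSpace ℝ (Fin N)) : ℝ :=
  (1 - ‖y‖ ^ 2) ^ alphaExp N p

/-- The energy functional `E(r₁,r₂)`. -/
def Efun (N : ℕ) (p : ℝ) (r₁ r₂ : EuclideanSpace ℝ (Fin N) → ℝ) : ℝ :=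
  ∫ y in ball (0 : EuclideanSpace ℝ (Fin N)) 1,
    (1 / 2 * r₂ y ^ 2 + 1 / 2 * ‖gradient r₁ y‖ ^ 2 - 1 / 2 * ⟪y, gradient r₁ y⟫ ^ 2
      + (p + 1) / (p - 1) ^ 2 * r₁ y ^ 2 - 1 / (p + 1) * |r₁ y| ^ (p + 1)) * rho N p y

/-- `κ₀ = (2(p+1)/(p−1)²)^{1/(p−1)}`. -/
def kappa0 (p : ℝ) : ℝ := (2 * (p + 1) / (p - 1) ^ 2) ^ (1 / (p - 1))

/-- First component of the generalized soliton `κ*(d,ν)`. -/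
def kappaStar1 (N : ℕ) (p : ℝ) (d : EuclideanSpace ℝ (Fin N)) (ν : ℝ)
    (y : EuclideanSpace ℝ (Fin N)) : ℝ :=
  kappa0 p * (1 - ‖d‖ ^ 2) ^ (1 / (p - 1)) * (1 + ν + ⟪d, y⟫) ^ (-(2 / (p - 1)))

/-- Second component of the generalized soliton `κ*(d,ν)`. -/
def kappaStar2 (N : ℕ) (p : ℝ) (d : EuclideanSpace ℝ (Fin N)) (ν : ℝ)
    (y : EuclideanSpace ℝ (Fin N)) : ℝ :=
  -(2 * kappa0 p * ν / (p - 1)) * (1 - ‖d‖ ^ 2) ^ (1 / (p - 1)) *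
    (1 + ν + ⟪d, y⟫) ^ (-((p + 1) / (p - 1)))

open Set

theorem EuclideanSpace.norm_toLp_cons_sq {n : ℕ} (t : ℝ) (z : EuclideanSpace ℝ (Fin n)) :
    ‖(WithLp.toLp 2 (Fin.cons t z : Fin (n + 1) → ℝ) : EuclideanSpace ℝ (Fin (n + 1)))‖ ^ 2
      = t ^ 2 + ‖z‖ ^ 2 := by
  simp [EuclideanSpace.norm_sq_eq, Fin.sum_univ_succ]

theorem EuclideanSpace.integral_eq_integral_integral_cons {n : ℕ} {E : Type*}
    [NormedAddCommGroup E] [NormedSpace ℝ E] {F : EuclideanSpace ℝ (Fin (n + 1)) → E}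
    (hF : Integrable F) :
    ∫ y, F y = ∫ t : ℝ, ∫ z : EuclideanSpace ℝ (Fin n), F (WithLp.toLp 2 (Fin.cons t z)) := by
  let Φ : ℝ × EuclideanSpace ℝ (Fin n) ≃ᵐ EuclideanSpace ℝ (Fin (n + 1)) :=
    ((MeasurableEquiv.refl ℝ).prodCongr (MeasurableEquiv.toLp 2 (Fin n → ℝ)).symm).trans
      ((MeasurableEquiv.piFinSuccAbove (fun _ => ℝ) 0).symm.trans
        (MeasurableEquiv.toLp 2 (Fin (n + 1) → ℝ)))
  have hΦ : MeasurePreserving Φ (volume.prod volume) volume :=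
    ((MeasurePreserving.id volume).prod (PiLp.volume_preserving_ofLp (Fin n))).trans
      ((volume_preserving_piFinSuccAbove (fun _ : Fin (n + 1) => ℝ) 0).symm.trans
        (PiLp.volume_preserving_toLp (Fin (n + 1))))
  have hΦ_apply : ∀ t z, Φ (t, z) = WithLp.toLp 2 (Fin.cons t z) := fun t z => by
    simp [Φ, MeasurableEquiv.piFinSuccAbove_symm_apply, Fin.insertNthEquiv]
    exact ⟨rfl, rfl⟩
  rw [← hΦ.integral_comp' F,
    integral_prod (fun x => F (Φ x)) ((hΦ.integrable_comp_emb Φ.measurableEmbedding).2 hF)]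
  simp only [hΦ_apply]

theorem integral_max_sub_norm_sq_rpow {E : Type*} [NormedAddCommGroup E] [NormedSpace ℝ E]
    [FiniteDimensional ℝ E] [MeasurableSpace E] [BorelSpace E] (μ : Measure E)
    [μ.IsAddHaarMeasure] {α : ℝ} (hα : 0 < α) (c : ℝ) :
    ∫ z, max (c - ‖z‖ ^ 2) 0 ^ α ∂μ
      = max c 0 ^ (α + Module.finrank ℝ E / 2) * ∫ z, max (1 - ‖z‖ ^ 2) 0 ^ α ∂μ := by
  rcases le_or_gt c 0 with hc | hc
  · have hzero : ∀ z : E, max (c - ‖z‖ ^ 2) 0 ^ α = 0 := fun z => by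
      rw [max_eq_right (by nlinarith [norm_nonneg z]), Real.zero_rpow hα.ne']
    rw [max_eq_right hc, Real.zero_rpow (by positivity), zero_mul]
    simp only [hzero, integral_zero]
  · have hscale : ∀ z : E, max (c - ‖√c • z‖ ^ 2) 0 ^ α = c ^ α * max (1 - ‖z‖ ^ 2) 0 ^ α := by
      intro z
      rw [norm_smul, Real.norm_of_nonneg (Real.sqrt_nonneg c), mul_pow, Real.sq_sqrt hc.le,
        ← Real.mul_rpow hc.le (le_max_right _ _), mul_max_of_nonneg _ _ hc.le]
      ring_nf
    have hcomp := Measure.integral_comp_smul_of_nonneg μ (fun z => max (c - ‖z‖ ^ 2) 0 ^ α) √c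
      (hR := Real.sqrt_nonneg c)
    simp only [hscale, integral_const_mul, smul_eq_mul] at hcomp
    rw [eq_inv_mul_iff_mul_eq₀ (by positivity)] at hcomp
    have hsqrt_pow : √c ^ Module.finrank ℝ E = c ^ (Module.finrank ℝ E / 2 : ℝ) := by
      rw [Real.sqrt_eq_rpow, ← Real.rpow_natCast, ← Real.rpow_mul hc.le]
      ring_nf
    rw [← hcomp, hsqrt_pow, max_eq_left hc.le, Real.rpow_add hc]
    ring

/- The weight is extended by `0` outside the unit ball, so that the integrand is continuous with
compact support and Fubini applies on the whole space. -/
theorem integral_apply_zero_mul_max_rpow {n : ℕ} {α : ℝ} (hα : 0 < α) {g : ℝ → ℝ}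
    (hg : Continuous g) :
    ∫ y : EuclideanSpace ℝ (Fin (n + 1)), g (y 0) * max (1 - ‖y‖ ^ 2) 0 ^ α
      = (∫ z : EuclideanSpace ℝ (Fin n), max (1 - ‖z‖ ^ 2) 0 ^ α)
          * ∫ t, g t * max (1 - t ^ 2) 0 ^ (α + n / 2) := by
  have hint : Integrable fun y : EuclideanSpace ℝ (Fin (n + 1)) =>
      g (y 0) * max (1 - ‖y‖ ^ 2) 0 ^ α := by
    have := hα.le
    refine Continuous.integrable_of_hasCompactSupport (by fun_prop) ?_
    refine HasCompactSupport.intro (isCompact_closedBall 0 1) fun y hy => ?_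
    rw [mem_closedBall_zero_iff, not_le] at hy
    rw [max_eq_right (by nlinarith), Real.zero_rpow hα.ne', mul_zero]
  rw [EuclideanSpace.integral_eq_integral_integral_cons hint, ← integral_const_mul]
  congr 1 with t
  simp only [EuclideanSpace.norm_toLp_cons_sq, Fin.cons_zero, ← sub_sub]
  rw [integral_const_mul, integral_max_sub_norm_sq_rpow volume hα, finrank_euclideanSpace_fin]
  ring

theorem integral_ball_apply_zero_mul_rpow {n : ℕ} {α : ℝ} (hα : 0 < α) {f : ℝ → ℝ}
    (hf : ContinuousOn f (Icc (-1) 1)) :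
    ∫ y in ball (0 : EuclideanSpace ℝ (Fin (n + 1))) 1, f (y 0) * (1 - ‖y‖ ^ 2) ^ α
      = (∫ z : EuclideanSpace ℝ (Fin n), max (1 - ‖z‖ ^ 2) 0 ^ α)
          * ∫ t in (-1)..1, f t * (1 - t ^ 2) ^ (α + n / 2) := by
  set g := IccExtend (by norm_num : (-1 : ℝ) ≤ 1) ((Icc (-1) 1).domRestrict f)
  have hgf : ∀ t ∈ Icc (-1 : ℝ) 1, g t = f t := fun t ht => IccExtend_of_mem _ _ ht
  have hball : ∀ y ∉ ball (0 : EuclideanSpace ℝ (Fin (n + 1))) 1,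
      g (y 0) * max (1 - ‖y‖ ^ 2) 0 ^ α = 0 := fun y hy => by
    rw [mem_ball_zero_iff, not_lt] at hy
    rw [max_eq_right (by nlinarith), Real.zero_rpow hα.ne', mul_zero]
  have hinterval : ∀ t ∉ Ioc (-1 : ℝ) 1, g t * max (1 - t ^ 2) 0 ^ (α + n / 2) = 0 := by
    intro t ht
    have : 1 - t ^ 2 ≤ 0 := by
      simp only [mem_Ioc, not_and_or, not_lt, not_le] at ht
      rcases ht with h | h <;> nlinarith
    rw [max_eq_right this, Real.zero_rpow (by positivity), mul_zero]
  calc ∫ y in ball (0 : EuclideanSpace ℝ (Fin (n + 1))) 1, f (y 0) * (1 - ‖y‖ ^ 2) ^ α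
      = ∫ y in ball (0 : EuclideanSpace ℝ (Fin (n + 1))) 1, g (y 0) * max (1 - ‖y‖ ^ 2) 0 ^ α := by
        refine setIntegral_congr_fun measurableSet_ball fun y hy => ?_
        rw [mem_ball_zero_iff] at hy
        have hy0 : |y 0| ≤ 1 := by simpa using (PiLp.norm_apply_le y 0).trans hy.le
        rw [hgf _ (abs_le.1 hy0), max_eq_left (by nlinarith [norm_nonneg y])]
    _ = (∫ z : EuclideanSpace ℝ (Fin n), max (1 - ‖z‖ ^ 2) 0 ^ α)
          * ∫ t in Ioc (-1) 1, g t * max (1 - t ^ 2) 0 ^ (α + n / 2) := by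
        rw [setIntegral_eq_integral_of_forall_compl_eq_zero hball,
          integral_apply_zero_mul_max_rpow hα hf.domRestrict.Icc_extend',
          setIntegral_eq_integral_of_forall_compl_eq_zero hinterval]
    _ = _ := by
        rw [intervalIntegral.integral_of_le (by norm_num)]
        congr 1
        refine setIntegral_congr_fun measurableSet_Ioc fun t ht => ?_
        rw [hgf t (Ioc_subset_Icc_self ht), max_eq_left (by nlinarith [ht.1, ht.2])]

theorem EuclideanSpace.exists_linearIsometryEquiv_inner_eq {n : ℕ}
    (d : EuclideanSpace ℝ (Fin (n + 1))) :
    ∃ T : EuclideanSpace ℝ (Fin (n + 1)) ≃ₗᵢ[ℝ] EuclideanSpace ℝ (Fin (n + 1)),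
      ∀ y, ⟪d, y⟫ = ‖d‖ * T y 0 := by
  set e : EuclideanSpace ℝ (Fin (n + 1)) := EuclideanSpace.single 0 ‖d‖
  have he : ‖d‖ = ‖e‖ := by simp [e]
  refine ⟨Submodule.reflection (ℝ ∙ (d - e))ᗮ, fun y => ?_⟩
  rw [← LinearIsometryEquiv.inner_map_map (Submodule.reflection (ℝ ∙ (d - e))ᗮ),
    Submodule.reflection_sub he]
  simp [e, EuclideanSpace.inner_single_left]

theorem integral_ball_inner_mul_rpow {n : ℕ} {α : ℝ} (hα : 0 < α)
    (d : EuclideanSpace ℝ (Fin (n + 1))) {g : ℝ → ℝ} (hg : ContinuousOn g (Icc (-‖d‖) ‖d‖)) :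
    ∫ y in ball (0 : EuclideanSpace ℝ (Fin (n + 1))) 1, g ⟪d, y⟫ * (1 - ‖y‖ ^ 2) ^ α
      = (∫ z : EuclideanSpace ℝ (Fin n), max (1 - ‖z‖ ^ 2) 0 ^ α)
          * ∫ t in (-1)..1, g (‖d‖ * t) * (1 - t ^ 2) ^ (α + n / 2) := by
  obtain ⟨T, hT⟩ := EuclideanSpace.exists_linearIsometryEquiv_inner_eq d
  have hpre : T ⁻¹' ball 0 1 = ball 0 1 := by ext y; simp
  have hrot := T.measurePreserving.setIntegral_preimage_emb T.toHomeomorph.measurableEmbedding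
    (fun z => g (‖d‖ * z 0) * (1 - ‖z‖ ^ 2) ^ α) (ball 0 1)
  simp only [hpre, LinearIsometryEquiv.norm_map, ← hT] at hrot
  rw [hrot]
  refine integral_ball_apply_zero_mul_rpow hα (hg.comp (by fun_prop) fun t ht => ?_)
  constructor <;> nlinarith [ht.1, ht.2, norm_nonneg d]

theorem add_mul_pos_of_abs_lt {a b t : ℝ} (hba : |b| < a) (ht : t ∈ Icc (-1 : ℝ) 1) :
    0 < a + b * t := by
  have : |b * t| ≤ |b| := by
    rw [abs_mul]; exact mul_le_of_le_one_right (abs_nonneg b) (abs_le.2 ht)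
  linarith [neg_abs_le (b * t)]

theorem continuousOn_add_mul_rpow {a b : ℝ} (hba : |b| < a) (k : ℝ) :
    ContinuousOn (fun t : ℝ => (a + b * t) ^ k) (Icc (-1) 1) :=
  ContinuousOn.rpow_const (by fun_prop) fun t ht => Or.inl (add_mul_pos_of_abs_lt hba ht).ne'

theorem intervalIntegrable_one_sub_sq_rpow_mul {γ : ℝ} (hγ : 0 ≤ γ) {f : ℝ → ℝ}
    (hf : ContinuousOn f (Icc (-1) 1)) :
    IntervalIntegrable (fun t => (1 - t ^ 2) ^ γ * f t) volume (-1) 1 := by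
  refine ContinuousOn.intervalIntegrable ?_
  rw [uIcc_of_le (by norm_num)]
  exact (by fun_prop : Continuous fun t : ℝ => (1 - t ^ 2) ^ γ).continuousOn.mul hf

theorem one_sub_sq_rpow_mul_rpow_comp_mobius {γ a b u : ℝ} (hba : |b| < a)
    (hu : u ∈ Icc (-1 : ℝ) 1) :
    (1 - ((a * u - b) / (a - b * u)) ^ 2) ^ γ
        * (a + b * ((a * u - b) / (a - b * u))) ^ (-(2 * γ + 2))
        * ((a ^ 2 - b ^ 2) / (a - b * u) ^ 2)
      = (a ^ 2 - b ^ 2) ^ (-(γ + 1)) * (1 - u ^ 2) ^ γ := by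
  have hq : 0 < a ^ 2 - b ^ 2 := by nlinarith [abs_nonneg b, sq_abs b]
  have hD : 0 < a - b * u := by
    simpa [sub_eq_add_neg] using
      add_mul_pos_of_abs_lt hba (t := -u) ⟨by linarith [hu.2], by linarith [hu.1]⟩
  have hsq : 1 - ((a * u - b) / (a - b * u)) ^ 2
      = (1 - u ^ 2) * ((a ^ 2 - b ^ 2) / (a - b * u) ^ 2) := by
    rw [div_pow, one_sub_div (pow_ne_zero 2 hD.ne'), mul_div_assoc']
    ring
  have haffine : a + b * ((a * u - b) / (a - b * u)) = (a ^ 2 - b ^ 2) / (a - b * u) := by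
    rw [mul_div_assoc', add_div' _ _ _ hD.ne']
    ring
  have hcancel : ((a ^ 2 - b ^ 2) / (a - b * u) ^ 2) ^ γ
      * ((a ^ 2 - b ^ 2) / (a - b * u)) ^ (-(2 * γ + 2)) * ((a ^ 2 - b ^ 2) / (a - b * u) ^ 2)
      = (a ^ 2 - b ^ 2) ^ (-(γ + 1)) := by
    rw [← Real.exp_log (by positivity : 0 < (a ^ 2 - b ^ 2) / (a - b * u) ^ 2),
      Real.rpow_def_of_pos (by positivity), Real.rpow_def_of_pos (by positivity),
      Real.rpow_def_of_pos hq, Real.log_exp, ← Real.exp_add, ← Real.exp_add,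
      Real.log_div hq.ne' (by positivity), Real.log_div hq.ne' hD.ne', Real.log_pow]
    ring_nf
  rw [hsq, haffine, Real.mul_rpow (by nlinarith [hu.1, hu.2]) (by positivity)]
  linear_combination (1 - u ^ 2) ^ γ * hcancel

theorem integral_one_sub_sq_rpow_mul_rpow_neg_two_mul_add_two {γ a b : ℝ} (hba : |b| < a) :
    ∫ t in (-1 : ℝ)..1, (1 - t ^ 2) ^ γ * (a + b * t) ^ (-(2 * γ + 2))
      = (a ^ 2 - b ^ 2) ^ (-(γ + 1)) * ∫ t in (-1 : ℝ)..1, (1 - t ^ 2) ^ γ := by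
  have hD : ∀ u ∈ Icc (-1 : ℝ) 1, a - b * u ≠ 0 := fun u hu => by
    simpa [sub_eq_add_neg] using
      (add_mul_pos_of_abs_lt hba (t := -u) ⟨by linarith [hu.2], by linarith [hu.1]⟩).ne'
  set φ : ℝ → ℝ := fun u => (a * u - b) / (a - b * u)
  have hφ : ∀ u ∈ Icc (-1 : ℝ) 1, HasDerivAt φ ((a ^ 2 - b ^ 2) / (a - b * u) ^ 2) u :=
    fun u hu => by
      refine (((hasDerivAt_id u).const_mul a |>.sub_const b).div
        ((hasDerivAt_id u).const_mul b |>.const_sub a) (hD u hu)).congr_deriv ?_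
      simp only [id]
      field_simp
      ring
  have hsubst := intervalIntegral.integral_comp_mul_deriv_of_deriv_nonneg (a := -1) (b := 1)
    (g := fun t => (1 - t ^ 2) ^ γ * (a + b * t) ^ (-(2 * γ + 2)))
    (fun u hu => (hφ u (by simpa using hu)).continuousAt.continuousWithinAt)
    (fun u hu => hφ u (Ioo_subset_Icc_self (by simpa using hu)))
    (fun u _ => div_nonneg (by nlinarith [abs_nonneg b, sq_abs b]) (sq_nonneg _))
  have hφ_neg_one : φ (-1) = -1 := by
    simp only [φ]; rw [div_eq_iff (by simpa using hD (-1) (by norm_num))]; ring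
  have hφ_one : φ 1 = 1 := by
    simp only [φ]; rw [div_eq_iff (by simpa using hD 1 (by norm_num))]; ring
  rw [hφ_neg_one, hφ_one] at hsubst
  rw [← hsubst, ← intervalIntegral.integral_const_mul]
  refine intervalIntegral.integral_congr fun u hu => ?_
  rw [uIcc_of_le (by norm_num)] at hu
  exact one_sub_sq_rpow_mul_rpow_comp_mobius hba hu

theorem integral_one_sub_sq_rpow_mul_recurrence {γ a b : ℝ} (hγ : 0 ≤ γ) (hba : |b| < a) :
    ∫ t in (-1 : ℝ)..1, (1 - t ^ 2) ^ γ * ((2 * γ + 1) * (a ^ 2 - b ^ 2)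
        * (a + b * t) ^ (-(2 * γ + 2)) - 2 * a * γ * (a + b * t) ^ (-(2 * γ + 1))
        - (a + b * t) ^ (-(2 * γ))) = 0 := by
  set F : ℝ → ℝ := fun t => b * ((1 - t ^ 2) ^ (γ + 1) * (a + b * t) ^ (-(2 * γ + 1)))
  have hF : ∀ t ∈ uIcc (-1 : ℝ) 1, HasDerivAt F ((1 - t ^ 2) ^ γ * ((2 * γ + 1) * (a ^ 2 - b ^ 2)
      * (a + b * t) ^ (-(2 * γ + 2)) - 2 * a * γ * (a + b * t) ^ (-(2 * γ + 1))
      - (a + b * t) ^ (-(2 * γ)))) t := by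
    intro t ht
    rw [uIcc_of_le (by norm_num)] at ht
    have hw := add_mul_pos_of_abs_lt hba ht
    have hP : HasDerivAt (fun t : ℝ => 1 - t ^ 2) (-(2 * t)) t := by
      simpa using (hasDerivAt_pow 2 t).const_sub 1
    have hW : HasDerivAt (fun t : ℝ => a + b * t) b t := by
      simpa using ((hasDerivAt_id t).const_mul b).const_add a
    refine (((hP.rpow_const (p := γ + 1) (Or.inr (by linarith))).mul
      (hW.rpow_const (p := -(2 * γ + 1)) (Or.inl hw.ne'))).const_mul b).congr_deriv ?_
    rw [add_sub_cancel_right, show -(2 * γ + 1) - 1 = -(2 * γ + 2) by ring,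
      show -(2 * γ + 1) = -(2 * γ + 2) + 1 by ring, show -(2 * γ) = -(2 * γ + 2) + 2 by ring,
      Real.rpow_add_one hw.ne', Real.rpow_add hw, Real.rpow_two,
      Real.rpow_add_one' (by nlinarith [ht.1, ht.2]) (by linarith)]
    ring
  have hW := continuousOn_add_mul_rpow hba
  rw [intervalIntegral.integral_eq_sub_of_hasDerivAt hF
    (intervalIntegrable_one_sub_sq_rpow_mul hγ (by fun_prop))]
  simp [F, Real.zero_rpow (by linarith : γ + 1 ≠ 0)]

def solitonProfile (γ a b w : ℝ) : ℝ :=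
  γ ^ 2 * (b ^ 2 - a) * w ^ (-(2 * γ + 2)) + γ ^ 2 * a * w ^ (-(2 * γ + 1))
    + γ / 2 * w ^ (-(2 * γ))

theorem continuousOn_solitonProfile {γ a b : ℝ} (hba : b < a) :
    ContinuousOn (fun c => solitonProfile γ a b (a + c)) (Icc (-b) b) := by
  have hW : ∀ k : ℝ, ContinuousOn (fun c => (a + c) ^ k) (Icc (-b) b) := fun k =>
    ContinuousOn.rpow_const (by fun_prop) fun c hc => Or.inl (by linarith [hc.1])
  unfold solitonProfile
  fun_prop

theorem integral_solitonProfile_mul {γ a b : ℝ} (hγ : 0 ≤ γ) (hba : |b| < a) :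
    ∫ t in (-1 : ℝ)..1, solitonProfile γ a b (a + b * t) * (1 - t ^ 2) ^ γ
      = γ * (γ * a * (a - 1) + (a ^ 2 - b ^ 2) / 2) * (a ^ 2 - b ^ 2) ^ (-(γ + 1))
          * ∫ t in (-1 : ℝ)..1, (1 - t ^ 2) ^ γ := by
  have hsplit : ∀ t, solitonProfile γ a b (a + b * t) * (1 - t ^ 2) ^ γ
      = γ * (γ * a * (a - 1) + (a ^ 2 - b ^ 2) / 2)
          * ((1 - t ^ 2) ^ γ * (a + b * t) ^ (-(2 * γ + 2)))
        - γ / 2 * ((1 - t ^ 2) ^ γ * ((2 * γ + 1) * (a ^ 2 - b ^ 2)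
          * (a + b * t) ^ (-(2 * γ + 2)) - 2 * a * γ * (a + b * t) ^ (-(2 * γ + 1))
          - (a + b * t) ^ (-(2 * γ)))) := fun t => by
    unfold solitonProfile; ring
  have hW := continuousOn_add_mul_rpow hba
  simp only [hsplit]
  rw [intervalIntegral.integral_sub, intervalIntegral.integral_const_mul,
    intervalIntegral.integral_const_mul, integral_one_sub_sq_rpow_mul_rpow_neg_two_mul_add_two hba,
    integral_one_sub_sq_rpow_mul_recurrence hγ hba]
  · ring
  all_goals exact (intervalIntegrable_one_sub_sq_rpow_mul hγ (by fun_prop)).const_mul _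

def energyDensity (N : ℕ) (p : ℝ) (r₁ r₂ : EuclideanSpace ℝ (Fin N) → ℝ)
    (y : EuclideanSpace ℝ (Fin N)) : ℝ :=
  1 / 2 * r₂ y ^ 2 + 1 / 2 * ‖gradient r₁ y‖ ^ 2 - 1 / 2 * ⟪y, gradient r₁ y⟫ ^ 2
    + (p + 1) / (p - 1) ^ 2 * r₁ y ^ 2 - 1 / (p + 1) * |r₁ y| ^ (p + 1)

theorem Efun_eq_integral_energyDensity (N : ℕ) (p : ℝ) (r₁ r₂ : EuclideanSpace ℝ (Fin N) → ℝ) :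
    Efun N p r₁ r₂ = ∫ y in ball 0 1, energyDensity N p r₁ r₂ y * (1 - ‖y‖ ^ 2) ^ alphaExp N p :=
  rfl

theorem rpow_add_one_eq_sq_mul_rpow_sub_one {x : ℝ} (hx : 0 ≤ x) {p : ℝ} (hp : p + 1 ≠ 0) :
    x ^ (p + 1) = x ^ 2 * x ^ (p - 1) := by
  rw [← Real.rpow_two, ← Real.rpow_add' hx (by convert hp using 1; ring)]
  ring_nf

theorem kappa0_pos {p : ℝ} (hp : 1 < p) : 0 < kappa0 p := by
  have : 0 < p - 1 := by linarith
  unfold kappa0; positivity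

theorem kappa0_rpow {p : ℝ} (hp : 1 < p) : kappa0 p ^ (p - 1) = 2 * (p + 1) / (p - 1) ^ 2 := by
  rw [kappa0, ← Real.rpow_mul (by positivity), one_div, inv_mul_cancel₀ (by linarith),
    Real.rpow_one]

theorem energyDensity_const_kappa0 {N : ℕ} {p : ℝ} (hp : 1 < p) (y : EuclideanSpace ℝ (Fin N)) :
    energyDensity N p (fun _ => kappa0 p) (fun _ => 0) y = kappa0 p ^ 2 / (p - 1) := by
  have hp₁ : p - 1 ≠ 0 := by linarith
  have hp₂ : p + 1 ≠ 0 := by linarith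
  rw [energyDensity, gradient_fun_const, abs_of_pos (kappa0_pos hp),
    rpow_add_one_eq_sq_mul_rpow_sub_one (kappa0_pos hp).le hp₂, kappa0_rpow hp]
  simp only [norm_zero, inner_zero_right]
  field_simp
  ring

theorem gradient_kappaStar1 {N : ℕ} (p : ℝ) (d : EuclideanSpace ℝ (Fin N)) (ν : ℝ)
    {y : EuclideanSpace ℝ (Fin N)} (hw : 0 < 1 + ν + ⟪d, y⟫) :
    gradient (kappaStar1 N p d ν) y
      = (kappa0 p * (1 - ‖d‖ ^ 2) ^ (1 / (p - 1)) * (-(2 / (p - 1)))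
          * (1 + ν + ⟪d, y⟫) ^ (-(2 / (p - 1)) - 1)) • d := by
  refine HasGradientAt.gradient ((hasGradientAt_iff_hasFDerivAt).2 ?_)
  have hinner : HasFDerivAt (fun z : EuclideanSpace ℝ (Fin N) => 1 + ν + ⟪d, z⟫)
      (innerSL ℝ d) y := by
    simpa using ((innerSL ℝ d).hasFDerivAt (x := y)).const_add (1 + ν)
  refine ((hinner.rpow_const (Or.inl hw.ne')).const_mul _).congr_fderiv ?_
  ext v
  simp only [InnerProductSpace.toDual_apply_apply, FunLike.coe_smul, Pi.smul_apply,
    innerSL_apply_apply, smul_eq_mul, real_inner_smul_left]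
  ring

theorem kappaStar1_rpow_sub_one {N : ℕ} {p : ℝ} (hp : 1 < p) {d : EuclideanSpace ℝ (Fin N)}
    (hd : ‖d‖ ≤ 1) (ν : ℝ) {y : EuclideanSpace ℝ (Fin N)} (hw : 0 < 1 + ν + ⟪d, y⟫) :
    kappaStar1 N p d ν y ^ (p - 1)
      = 2 * (p + 1) / (p - 1) ^ 2 * (1 - ‖d‖ ^ 2) / (1 + ν + ⟪d, y⟫) ^ 2 := by
  have hp' : 0 < p - 1 := by linarith
  have hs : 0 ≤ 1 - ‖d‖ ^ 2 := by nlinarith [norm_nonneg d]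
  rw [kappaStar1, Real.mul_rpow (by have := kappa0_pos hp; positivity) (by positivity),
    Real.mul_rpow (kappa0_pos hp).le (by positivity), kappa0_rpow hp, ← Real.rpow_mul hs,
    one_div_mul_cancel hp'.ne', Real.rpow_one, ← Real.rpow_mul hw.le,
    neg_mul, div_mul_cancel₀ _ hp'.ne', Real.rpow_neg hw.le, Real.rpow_two]
  ring

theorem energyDensity_kappaStar {N : ℕ} {p : ℝ} (hp : 1 < p) {d : EuclideanSpace ℝ (Fin N)}
    (hd : ‖d‖ ≤ 1) (ν : ℝ) {y : EuclideanSpace ℝ (Fin N)} (hw : 0 < 1 + ν + ⟪d, y⟫) :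
    energyDensity N p (kappaStar1 N p d ν) (kappaStar2 N p d ν) y
      = (kappa0 p * (1 - ‖d‖ ^ 2) ^ (1 / (p - 1))) ^ 2
          * solitonProfile (2 / (p - 1)) (1 + ν) ‖d‖ (1 + ν + ⟪d, y⟫) := by
  have hκ_nonneg : 0 ≤ kappaStar1 N p d ν y := by
    have := kappa0_pos hp
    have : 0 ≤ 1 - ‖d‖ ^ 2 := by nlinarith [norm_nonneg d]
    unfold kappaStar1; positivity
  have hκ_pow : |kappaStar1 N p d ν y| ^ (p + 1)
      = kappaStar1 N p d ν y ^ 2 * kappaStar1 N p d ν y ^ (p - 1) := by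
    rw [abs_of_nonneg hκ_nonneg, rpow_add_one_eq_sq_mul_rpow_sub_one hκ_nonneg (by linarith)]
  rw [energyDensity, hκ_pow, kappaStar1_rpow_sub_one hp hd ν hw]
  have hp₁ : p - 1 ≠ 0 := by linarith
  set w := 1 + ν + ⟪d, y⟫ with hw_def
  set U := w ^ (-(2 / (p - 1)))
  have hU_sub_one : w ^ (-(2 / (p - 1)) - 1) = U / w := Real.rpow_sub_one hw.ne' _
  have hU_zero : w ^ (-(2 * (2 / (p - 1)))) = U ^ 2 := by
    rw [sq, ← Real.rpow_add hw]; ring_nf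
  have hU_one : w ^ (-(2 * (2 / (p - 1)) + 1)) = U ^ 2 / w := by
    rw [← hU_zero, ← Real.rpow_sub_one hw.ne']; ring_nf
  have hU_two : w ^ (-(2 * (2 / (p - 1)) + 2)) = U ^ 2 / w ^ 2 := by
    rw [← hU_zero, ← Real.rpow_sub_natCast hw.ne' _ 2]; ring_nf
  have hκ₁ : kappaStar1 N p d ν y = kappa0 p * (1 - ‖d‖ ^ 2) ^ (1 / (p - 1)) * U := rfl
  have hκ₂ : kappaStar2 N p d ν y
      = -(2 * kappa0 p * ν / (p - 1)) * (1 - ‖d‖ ^ 2) ^ (1 / (p - 1)) * (U / w) := by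
    rw [kappaStar2, show -((p + 1) / (p - 1)) = -(2 / (p - 1)) - 1 by field_simp; ring,
      hU_sub_one]
  simp only [hκ₁, hκ₂, gradient_kappaStar1 p d ν hw, norm_smul, real_inner_smul_right,
    real_inner_comm d y, mul_pow, Real.norm_eq_abs, sq_abs, solitonProfile]
  rw [← hw_def, hU_sub_one, hU_zero, hU_one, hU_two,
    show ⟪d, y⟫ = w - (1 + ν) by rw [hw_def]; ring]
  field_simp
  ring

theorem alphaExp_pos {N : ℕ} {p : ℝ} (hp : 1 < p) (hpc : 2 ≤ N → p < 1 + 4 / ((N : ℝ) - 1)) :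
    0 < alphaExp N p := by
  have hp' : 0 < p - 1 := by linarith
  unfold alphaExp
  rcases lt_or_ge N 2 with hN | hN
  · have : (N : ℝ) ≤ 1 := by exact_mod_cast Nat.lt_succ_iff.1 hN
    have : 0 < 2 / (p - 1) := by positivity
    linarith
  · have hN' : (0 : ℝ) < N - 1 := by
      have : (2 : ℝ) ≤ N := by exact_mod_cast hN
      linarith
    have h := hpc hN
    rw [← sub_lt_iff_lt_add', lt_div_iff₀ hN'] at h
    rw [sub_pos, div_lt_div_iff₀ (by norm_num) hp']
    linarith

theorem alphaExp_succ_add_half (n : ℕ) (p : ℝ) : alphaExp (n + 1) p + n / 2 = 2 / (p - 1) := by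
  rw [alphaExp]; push_cast; ring

theorem Efun_kappa0 {n : ℕ} {p : ℝ} (hp : 1 < p) (hα : 0 < alphaExp (n + 1) p) :
    Efun (n + 1) p (fun _ => kappa0 p) (fun _ => 0)
      = (∫ z : EuclideanSpace ℝ (Fin n), max (1 - ‖z‖ ^ 2) 0 ^ alphaExp (n + 1) p)
        * (kappa0 p ^ 2 / (p - 1) * ∫ t in (-1 : ℝ)..1, (1 - t ^ 2) ^ (2 / (p - 1))) := by
  simp only [Efun_eq_integral_energyDensity, energyDensity_const_kappa0 hp]
  rw [integral_ball_inner_mul_rpow hα 0 (g := fun _ => kappa0 p ^ 2 / (p - 1)) continuousOn_const,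
    alphaExp_succ_add_half, intervalIntegral.integral_const_mul]

theorem Efun_kappaStar {n : ℕ} {p : ℝ} (hp : 1 < p) (hα : 0 < alphaExp (n + 1) p)
    {d : EuclideanSpace ℝ (Fin (n + 1))} (hd : ‖d‖ < 1) {ν : ℝ} (hν : -1 + ‖d‖ < ν) :
    Efun (n + 1) p (kappaStar1 (n + 1) p d ν) (kappaStar2 (n + 1) p d ν)
      = (∫ z : EuclideanSpace ℝ (Fin n), max (1 - ‖z‖ ^ 2) 0 ^ alphaExp (n + 1) p)
        * ((kappa0 p * (1 - ‖d‖ ^ 2) ^ (1 / (p - 1))) ^ 2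
          * (2 / (p - 1) * (2 / (p - 1) * (1 + ν) * (1 + ν - 1) + ((1 + ν) ^ 2 - ‖d‖ ^ 2) / 2)
            * ((1 + ν) ^ 2 - ‖d‖ ^ 2) ^ (-(2 / (p - 1) + 1))
            * ∫ t in (-1 : ℝ)..1, (1 - t ^ 2) ^ (2 / (p - 1)))) := by
  have hba : ‖d‖ < 1 + ν := by linarith
  have hw : ∀ y ∈ ball (0 : EuclideanSpace ℝ (Fin (n + 1))) 1, 0 < 1 + ν + ⟪d, y⟫ := by
    intro y hy
    have := (abs_real_inner_le_norm d y).trans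
      (mul_le_of_le_one_right (norm_nonneg d) (mem_ball_zero_iff.1 hy).le)
    linarith [neg_abs_le ⟪d, y⟫]
  rw [Efun_eq_integral_energyDensity, setIntegral_congr_fun measurableSet_ball fun y hy => by
      rw [energyDensity_kappaStar hp hd.le ν (hw y hy)],
    integral_ball_inner_mul_rpow hα d (g := fun c => (kappa0 p * (1 - ‖d‖ ^ 2) ^ (1 / (p - 1))) ^ 2
      * solitonProfile (2 / (p - 1)) (1 + ν) ‖d‖ (1 + ν + c))
      (continuousOn_const.mul (continuousOn_solitonProfile hba)), alphaExp_succ_add_half]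
  simp only [mul_assoc, intervalIntegral.integral_const_mul,
    integral_solitonProfile_mul (div_nonneg zero_le_two (by linarith) : (0 : ℝ) ≤ 2 / (p - 1))
      (by rwa [abs_norm] : |‖d‖| < 1 + ν)]

/-- Explicit value of the energy of the generalized solitons `κ*(d,ν)`. -/
theorem stmt18 (N : ℕ) (p : ℝ) (hN : 1 ≤ N) (hp1 : 1 < p)
    (hpc : 2 ≤ N → p < 1 + 4 / ((N : ℝ) - 1))
    (d : EuclideanSpace ℝ (Fin N)) (hd : ‖d‖ < 1)
    (ν : ℝ) (hν : -1 + ‖d‖ < ν)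
    (lam : ℝ) (hlam : lam = ((1 - ‖d‖ ^ 2) / ((1 + ν) ^ 2 - ‖d‖ ^ 2)) ^ (1 / (p - 1))) :
    Efun N p (kappaStar1 N p d ν) (kappaStar2 N p d ν)
      = Efun N p (fun _ => kappa0 p) (fun _ => 0) / (p - 1) * lam ^ 2 *
          (p + 1 + 2 * lam ^ (p - 1) * (ν ^ 2 / (1 - ‖d‖ ^ 2) - 1)) := by
  obtain ⟨n, rfl⟩ : ∃ n, N = n + 1 := ⟨N - 1, by omega⟩
  have hα := alphaExp_pos hp1 hpc
  have hp : 0 < p - 1 := by linarith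
  have hs : 0 < 1 - ‖d‖ ^ 2 := by nlinarith [norm_nonneg d]
  have hq : 0 < (1 + ν) ^ 2 - ‖d‖ ^ 2 := by nlinarith [norm_nonneg d]
  have hlam_pow : lam ^ (p - 1) = (1 - ‖d‖ ^ 2) / ((1 + ν) ^ 2 - ‖d‖ ^ 2) := by
    rw [hlam, ← Real.rpow_mul (by positivity), one_div_mul_cancel hp.ne', Real.rpow_one]
  have hlam_sq : ((1 - ‖d‖ ^ 2) ^ (1 / (p - 1))) ^ 2
      * ((1 + ν) ^ 2 - ‖d‖ ^ 2) ^ (-(2 / (p - 1) + 1)) = lam ^ 2 / ((1 + ν) ^ 2 - ‖d‖ ^ 2) := by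
    rw [hlam, Real.div_rpow hs.le hq.le, Real.rpow_neg hq.le, Real.rpow_add_one hq.ne',
      show 2 / (p - 1) = 1 / (p - 1) * (2 : ℕ) by push_cast; ring, Real.rpow_mul_natCast hq.le]
    field_simp
  rw [Efun_kappaStar hp1 hα hd hν, Efun_kappa0 hp1 hα, hlam_pow,
    show ∀ C k X γ c r I : ℝ,
      C * ((k * X) ^ 2 * (γ * c * r * I)) = C * k ^ 2 * γ * c * I * (X ^ 2 * r)
      from fun _ _ _ _ _ _ _ => by ring, hlam_sq]
  field_simp
  ring
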